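/- Let C be an n×n symmetric Kalmanson matrix with n ≥ 3. Then the tour π = ⟨1, 2, …, n⟩ satisfies c(π) ≤ c(τ) for every tour τ on {1,…,n}; moreover the reversed tour π⁻ = ⟨1, n, n−1, …, 2⟩ has the same length as π and is therefore also an optimal TSP tour. -/

import Mathlib

/-- Length of a walk along a list of nodes (sum of consecutive edge costs). -/
def pathLen {α : Type*} (C : α → α → ℝ) : List α → ℝ
  | [] => 0
  | [_] => 0
  | a :: b :: t => C a b + pathLen C (b :: t)

/-- Length of the closed tour visiting the nodes of `l` in order and
returning from the last node to the first one. -/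
def tourLen {α : Type*} (C : α → α → ℝ) (l : List α) : ℝ :=
  pathLen C (l ++ l.take 1)

/-- `l` is a tour on the finite set `I`: an enumeration of the elements of `I`,
each appearing exactly once. -/
def IsTourOn {α : Type*} [DecidableEq α] (I : Finset α) (l : List α) : Prop :=
  l.Nodup ∧ l.toFinset = I

/-- Kalmanson conditions for a symmetric matrix indexed by `Fin n`. -/
def IsKalmanson {n : ℕ} (C : Fin n → Fin n → ℝ) : Prop :=
  ∀ i j k l : Fin n, i < j → j < k → k < l →
    C i j + C k l ≤ C i k + C j l ∧ C i l + C j k ≤ C i k + C j l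

/-!
Induction on the number of nodes, deleting the largest node `m`. In any tour `m` sits between
two distinct nodes `a`, `b`, and removing it shortens the tour by the insertion cost
`C a m + C m b - C a b`. The two Kalmanson inequalities say that moving `a` down or `b` up can
only lower this cost, so it is smallest when `{a, b}` consists of the least and the greatest
remaining node, which is where `m` sits in the sorted tour. The closed walk of the reversed
tour is the reverse of that of the sorted tour, so by symmetry the two have the same length.
-/

open scoped List

variable {α : Type*}

lemma mem_Icc_of_pairwise_lt [Preorder α] {i j x : α} {v : List α}
    (h : (i :: v ++ [j]).Pairwise (· < ·)) (hx : x ∈ i :: v ++ [j]) : x ∈ Set.Icc i j := by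
  have hi : ∀ y ∈ v ++ [j], i < y := (List.pairwise_cons.1 (List.cons_append ▸ h)).1
  have hj : ∀ y ∈ i :: v, y < j := fun y hy => (List.pairwise_append.1 h).2.2 y hy j (by simp)
  rw [List.cons_append, List.mem_cons] at hx
  rcases hx with rfl | hx
  · exact ⟨le_rfl, (hj x (by simp)).le⟩
  · exact ⟨(hi x hx).le, by rcases List.mem_append.1 hx with hx | hx <;> simp_all [le_of_lt]⟩

lemma exists_isRotated_append_singleton {l : List α} {m : α} (hm : m ∈ l) :
    ∃ t, l ~r t ++ [m] := by
  obtain ⟨l₁, l₂, rfl⟩ := List.append_of_mem hm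
  exact ⟨l₂ ++ l₁, List.isRotated_append.trans (List.isRotated_concat m (l₂ ++ l₁)).symm⟩

lemma exists_eq_cons_append_singleton {l : List α} (hl : 2 ≤ l.length) :
    ∃ b s a, l = b :: s ++ [a] := by
  rcases l.eq_nil_or_concat' with rfl | ⟨_ | ⟨b, s⟩, a, rfl⟩
  · simp at hl
  · simp at hl
  · exact ⟨b, s, a, rfl⟩

variable (C : α → α → ℝ)

lemma pathLen_append_pair : ∀ (l : List α) (a x : α),
    pathLen C (l ++ [a, x]) = pathLen C (l ++ [a]) + C a x
  | [], a, x => by simp [pathLen]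
  | [c], a, x => by simp [pathLen]
  | c :: d :: l, a, x => by
    have ih := pathLen_append_pair (d :: l) a x
    simp only [List.cons_append, pathLen] at ih ⊢
    rw [ih]
    ring

lemma tourLen_cons (a : α) (t : List α) : tourLen C (a :: t) = tourLen C (t ++ [a]) := by
  rcases t with _ | ⟨b, s⟩
  · rfl
  · have h := pathLen_append_pair C (b :: s) a b
    simp only [tourLen, List.cons_append, List.take_succ_cons, List.take_zero, List.append_assoc,
      List.nil_append, pathLen] at h ⊢
    rw [h]
    ring

lemma tourLen_rotate (n : ℕ) : ∀ l : List α, tourLen C (l.rotate n) = tourLen C l := by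
  induction n with
  | zero => simp
  | succ n ih =>
    rintro (_ | ⟨a, t⟩)
    · simp
    · rw [List.rotate_cons_succ, ih, tourLen_cons]

lemma List.IsRotated.tourLen_eq {l l' : List α} (h : l ~r l') : tourLen C l = tourLen C l' := by
  obtain ⟨n, rfl⟩ := h
  exact (tourLen_rotate C n l).symm

def insertionCost (a b m : α) : ℝ := C a m + C m b - C a b

lemma tourLen_cons_append_pair (b : α) (s : List α) (a m : α) :
    tourLen C (b :: s ++ [a, m]) = tourLen C (b :: s ++ [a]) + insertionCost C a b m := by
  have h₁ : b :: s ++ [a, m] ++ [b] = b :: s ++ [a] ++ [m, b] := by simp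
  have h₂ : b :: s ++ [a] ++ [m] = b :: s ++ [a, m] := by simp
  change pathLen C (b :: s ++ [a, m] ++ [b]) = pathLen C (b :: s ++ [a] ++ [b]) + _
  rw [h₁, pathLen_append_pair, h₂, pathLen_append_pair, List.append_assoc, List.singleton_append,
    pathLen_append_pair, insertionCost]
  ring

lemma pathLen_reverse (hsym : ∀ a b, C a b = C b a) :
    ∀ l : List α, pathLen C l.reverse = pathLen C l
  | [] => rfl
  | [_] => rfl
  | a :: b :: t => by
    rw [List.reverse_cons, List.reverse_cons, List.append_assoc, List.singleton_append,
      pathLen_append_pair, ← List.reverse_cons, pathLen_reverse hsym (b :: t), pathLen, hsym]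
    ring

lemma tourLen_cons_reverse (hsym : ∀ a b, C a b = C b a) (a : α) (t : List α) :
    tourLen C (a :: t.reverse) = tourLen C (a :: t) := by
  have h : a :: t.reverse ++ [a] = (a :: t ++ [a]).reverse := by simp
  simp only [tourLen, List.take_succ_cons, List.take_zero, h, pathLen_reverse C hsym]

lemma tourLen_take_one_append_reverse_drop_one (hsym : ∀ a b, C a b = C b a) (l : List α) :
    tourLen C (l.take 1 ++ (l.drop 1).reverse) = tourLen C l := by
  rcases l with _ | ⟨a, t⟩
  · rfl
  · exact tourLen_cons_reverse C hsym a t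

lemma insertionCost_comm (hsym : ∀ a b, C a b = C b a) (a b m : α) :
    insertionCost C a b m = insertionCost C b a m := by
  simp only [insertionCost, hsym a b, hsym a m, hsym m b]
  ring

def IsKalmansonOrder [LinearOrder α] : Prop :=
  ∀ i j k l : α, i < j → j < k → k < l →
    C i j + C k l ≤ C i k + C j l ∧ C i l + C j k ≤ C i k + C j l

section IsKalmansonOrder

variable [LinearOrder α] {C}

lemma IsKalmansonOrder.insertionCost_le_of_lt_left (hkal : IsKalmansonOrder C) {i p q m : α}
    (hip : i < p) (hpq : p < q) (hqm : q < m) :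
    insertionCost C i q m ≤ insertionCost C p q m := by
  have := (hkal i p q m hip hpq hqm).2
  simp only [insertionCost]
  linarith

lemma IsKalmansonOrder.insertionCost_le_of_lt_right (hsym : ∀ a b, C a b = C b a)
    (hkal : IsKalmansonOrder C) {i q j m : α} (hiq : i < q) (hqj : q < j) (hjm : j < m) :
    insertionCost C i j m ≤ insertionCost C i q m := by
  have := (hkal i q j m hiq hqj hjm).1
  simp only [insertionCost, hsym m j, hsym m q]
  linarith

lemma IsKalmansonOrder.insertionCost_le (hsym : ∀ a b, C a b = C b a)
    (hkal : IsKalmansonOrder C) {i p q j m : α} (hip : i ≤ p) (hpq : p < q) (hqj : q ≤ j)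
    (hjm : j < m) : insertionCost C i j m ≤ insertionCost C p q m := by
  have hright : insertionCost C i j m ≤ insertionCost C i q m := by
    rcases hqj.eq_or_lt with rfl | hqj
    · rfl
    · exact hkal.insertionCost_le_of_lt_right hsym (hip.trans_lt hpq) hqj hjm
  have hleft : insertionCost C i q m ≤ insertionCost C p q m := by
    rcases hip.eq_or_lt with rfl | hip
    · rfl
    · exact hkal.insertionCost_le_of_lt_left hip hpq (hqj.trans_lt hjm)
  exact hright.trans hleft

lemma IsKalmansonOrder.insertionCost_le_of_ne (hsym : ∀ a b, C a b = C b a)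
    (hkal : IsKalmansonOrder C) {i j a b m : α} (ha : a ∈ Set.Icc i j) (hb : b ∈ Set.Icc i j)
    (hab : a ≠ b) (hjm : j < m) : insertionCost C j i m ≤ insertionCost C a b m := by
  rw [insertionCost_comm C hsym j i]
  rcases hab.lt_or_gt with hab | hba
  · exact hkal.insertionCost_le hsym ha.1 hab hb.2 hjm
  · rw [insertionCost_comm C hsym a b]
    exact hkal.insertionCost_le hsym hb.1 hba ha.2 hjm

lemma IsKalmansonOrder.tourLen_append_singleton_le
    (hsym : ∀ a b, C a b = C b a) (hkal : IsKalmansonOrder C) {s t : List α} {m : α}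
    (hs : s.Pairwise (· < ·)) (hsm : ∀ x ∈ s, x < m) (ht : t ~ s)
    (hle : tourLen C s ≤ tourLen C t) : tourLen C (s ++ [m]) ≤ tourLen C (t ++ [m]) := by
  rcases Nat.lt_or_ge s.length 2 with hlen | hlen
  · obtain rfl : t = s := by
      rcases s with _ | ⟨x, _ | _⟩
      · exact ht.eq_nil
      · exact List.perm_singleton.1 ht
      · simp at hlen
    rfl
  obtain ⟨i, v, j, rfl⟩ := exists_eq_cons_append_singleton hlen
  obtain ⟨b, w, a, rfl⟩ := exists_eq_cons_append_singleton (ht.length_eq ▸ hlen)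
  have hmem : ∀ x ∈ b :: w ++ [a], x ∈ Set.Icc i j := fun x hx =>
    mem_Icc_of_pairwise_lt hs (ht.subset hx)
  have hab : a ≠ b := by
    have hnd := ht.nodup_iff.2 hs.nodup
    simp only [List.cons_append, List.nodup_cons, List.mem_append, List.mem_singleton] at hnd
    exact fun h => hnd.1 (.inr h.symm)
  calc tourLen C (i :: v ++ [j] ++ [m])
      = tourLen C (i :: v ++ [j]) + insertionCost C j i m := by
        simpa using tourLen_cons_append_pair C i v j m
    _ ≤ tourLen C (b :: w ++ [a]) + insertionCost C a b m :=
        add_le_add hle (hkal.insertionCost_le_of_ne hsym (hmem a (by simp)) (hmem b (by simp))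
          hab (hsm j (by simp)))
    _ = tourLen C (b :: w ++ [a] ++ [m]) := by
        simpa using (tourLen_cons_append_pair C b w a m).symm

theorem IsKalmansonOrder.tourLen_le_of_perm
    (hsym : ∀ a b, C a b = C b a) (hkal : IsKalmansonOrder C) {s l : List α}
    (hs : s.Pairwise (· < ·)) (hl : l ~ s) : tourLen C s ≤ tourLen C l := by
  induction s using List.reverseRecOn generalizing l with
  | nil => rw [hl.eq_nil]
  | append_singleton s m ih =>
    obtain ⟨hs, -, hsm⟩ := List.pairwise_append.1 hs
    obtain ⟨t, hlt⟩ := exists_isRotated_append_singleton (hl.mem_iff.2 (List.mem_concat_self ..))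
    have ht : t ~ s := List.perm_append_right_iff _ |>.1 (hlt.perm.symm.trans hl)
    rw [hlt.tourLen_eq]
    exact hkal.tourLen_append_singleton_le hsym hs (fun x hx => hsm x hx m (by simp)) ht (ih hs ht)

end IsKalmansonOrder

lemma IsTourOn.perm [DecidableEq α] {I : Finset α} {l l' : List α} (hl : IsTourOn I l)
    (hl' : IsTourOn I l') : l ~ l' :=
  List.perm_of_nodup_nodup_toFinset_eq hl.1 hl'.1 (hl.2.trans hl'.2.symm)

lemma isTourOn_finRange (n : ℕ) : IsTourOn Finset.univ (List.finRange n) :=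
  ⟨List.nodup_finRange n, List.toFinset_finRange n⟩

theorem identity_tour_and_its_reverse_optimal_for_kalmanson_general
    {n : ℕ} (C : Fin n → Fin n → ℝ)
    (hsym : ∀ i j, C i j = C j i) (hkal : IsKalmanson C) :
    (∀ l : List (Fin n), IsTourOn Finset.univ l →
        tourLen C (List.finRange n) ≤ tourLen C l) ∧
    tourLen C ((List.finRange n).take 1 ++ ((List.finRange n).drop 1).reverse) =
      tourLen C (List.finRange n) ∧
    (∀ l : List (Fin n), IsTourOn Finset.univ l →
        tourLen C ((List.finRange n).take 1 ++ ((List.finRange n).drop 1).reverse) ≤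
          tourLen C l) := by
  have hopt : ∀ l : List (Fin n), IsTourOn Finset.univ l →
      tourLen C (List.finRange n) ≤ tourLen C l := fun l hl =>
    IsKalmansonOrder.tourLen_le_of_perm hsym hkal (List.sortedLT_finRange n).pairwise
      (hl.perm (isTourOn_finRange n))
  have hrev := tourLen_take_one_append_reverse_drop_one C hsym (List.finRange n)
  exact ⟨hopt, hrev, fun l hl => hrev ▸ hopt l hl⟩

theorem identity_tour_and_its_reverse_optimal_for_kalmanson
    {n : ℕ} (hn : 3 ≤ n) (C : Fin n → Fin n → ℝ)
    (hsym : ∀ i j, C i j = C j i) (hkal : IsKalmanson C) :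
    (∀ l : List (Fin n), IsTourOn Finset.univ l →
        tourLen C (List.finRange n) ≤ tourLen C l) ∧
    tourLen C ((List.finRange n).take 1 ++ ((List.finRange n).drop 1).reverse) =
      tourLen C (List.finRange n) ∧
    (∀ l : List (Fin n), IsTourOn Finset.univ l →
        tourLen C ((List.finRange n).take 1 ++ ((List.finRange n).drop 1).reverse) ≤
          tourLen C l) :=
  identity_tour_and_its_reverse_optimal_for_kalmanson_general C hsym hkal
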